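/- (Theorem, Gauss curvature of the θ-family) Let U ⊆ ℂ be open, and let a, μ : U → ℂ be holomorphic with μ(w) ≠ 0 and |a(w)| ≠ 1 for all w ∈ U. Fix θ ∈ ℝ and set λ_θ(w) = √(4|μ(w)|²(1 − 2|a(w)|²cos θ + |a(w)|⁴)) > 0. Then the Gauss curvature K(θ;w) = −(1/λ_θ²) Δ ln λ_θ of the surface F(θ;·) satisfies, at every w ∈ U, K(θ;w) = |a'(w)|²((1 + |a(w)|⁴)cos θ − 2|a(w)|²) / (|μ(w)|²(1 − 2|a(w)|²cos θ + |a(w)|⁴)³). -/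

import Mathlib

/-!
Write `λ² = 4|μ|² q(|a|²)` with `q(t) = 1 - 2t cos θ + t²`, so that
`log λ = log 2 + log |μ| + ½ log q(|a|²)`. The middle term is harmonic, `μ` being holomorphic
and nonvanishing. For the last one, the Laplacian transforms under a holomorphic `a` by
`Δ(H ∘ a) = |a'|² (ΔH) ∘ a`, and for a radial `H(ζ) = φ(|ζ|²)` one has
`ΔH = 4(t φ''(t) + φ'(t))` at `t = |ζ|²`; for `φ = ½ log q` this is
`4(2t - (1 + t²) cos θ) / q²`.
-/

open Complex ComplexConjugate

/-- The Euclidean Laplacian `Δf = f_uu + f_vv` of `f : ℂ → ℝ`, `w = u + iv`. -/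
noncomputable def lap (f : ℂ → ℝ) (w : ℂ) : ℝ :=
  fderiv ℝ (fun z => fderiv ℝ f z 1) w 1 +
    fderiv ℝ (fun z => fderiv ℝ f z Complex.I) w Complex.I

open Filter Topology
open scoped RealInnerProductSpace

lemma lap_congr {f g : ℂ → ℝ} {w : ℂ} (h : f =ᶠ[𝓝 w] g) : lap f w = lap g w := by
  have hv (v : ℂ) : (fun z => fderiv ℝ f z v) =ᶠ[𝓝 w] fun z => fderiv ℝ g z v :=
    h.eventuallyEq_nhds.mono fun z hz => by simp only [hz.fderiv_eq]
  rw [lap, lap, (hv 1).fderiv_eq, (hv I).fderiv_eq]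

lemma lap_const_add (c : ℝ) (f : ℂ → ℝ) (w : ℂ) : lap (fun z => c + f z) w = lap f w := by
  simp only [lap, fderiv_const_add]

lemma lap_eq_fderiv_fderiv {f : ℂ → ℝ} {w : ℂ} (hf : DifferentiableAt ℝ (fderiv ℝ f) w) :
    lap f w = fderiv ℝ (fderiv ℝ f) w 1 1 + fderiv ℝ (fderiv ℝ f) w I I := by
  have hv (v : ℂ) : fderiv ℝ (fun z => fderiv ℝ f z v) w = (fderiv ℝ (fderiv ℝ f) w).flip v :=
    (hf.hasFDerivAt.clm_apply (hasFDerivAt_const v w)).fderiv.trans (by ext; simp)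
  rw [lap, hv, hv]
  rfl

lemma lap_add {f g : ℂ → ℝ} {w : ℂ} (hf : ContDiffAt ℝ 2 f w) (hg : ContDiffAt ℝ 2 g w) :
    lap (fun z => f z + g z) w = lap f w + lap g w := by
  have hD {h : ℂ → ℝ} (hh : ContDiffAt ℝ 2 h w) : DifferentiableAt ℝ (fderiv ℝ h) w :=
    (hh.fderiv_right (m := 1) le_rfl).differentiableAt one_ne_zero
  have hsum : fderiv ℝ (fun z => f z + g z) =ᶠ[𝓝 w] fderiv ℝ f + fderiv ℝ g := by
    filter_upwards [hf.eventually (by simp), hg.eventually (by simp)] with z hfz hgz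
    exact fderiv_fun_add (hfz.differentiableAt two_ne_zero) (hgz.differentiableAt two_ne_zero)
  rw [lap_eq_fderiv_fderiv (hD hf), lap_eq_fderiv_fderiv (hD hg),
    lap_eq_fderiv_fderiv ((hD hf).add (hD hg) |>.congr_of_eventuallyEq hsum),
    hsum.fderiv_eq, fderiv_add (hD hf) (hD hg)]
  simp only [add_apply]
  ring

lemma DifferentiableAt.real_fderiv_apply {a : ℂ → ℂ} {z : ℂ} (h : DifferentiableAt ℂ a z)
    (v : ℂ) :
    fderiv ℝ a z v = deriv a z * v := by
  rw [h.fderiv_restrictScalars ℝ, h.hasDerivAt.hasFDerivAt.fderiv]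
  simp [mul_comm]

lemma ContinuousLinearMap.diag_add_diag_mul_I (B : ℂ →L[ℝ] ℂ →L[ℝ] ℝ) (x : ℂ) :
    B x x + B (x * I) (x * I) = ‖x‖ ^ 2 * (B 1 1 + B I I) := by
  set p := x.re
  set q := x.im
  have hx : x = p • (1 : ℂ) + q • I := by simp [p, q, Complex.re_add_im]
  have hxI : x * I = (-q) • (1 : ℂ) + p • I := by
    apply Complex.ext <;> simp [p, q]
  have hn : ‖x‖ ^ 2 = p ^ 2 + q ^ 2 := by rw [Complex.sq_norm, Complex.normSq_apply]; ring
  rw [hn, hxI, hx]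
  simp only [map_add, map_smul, add_apply, smul_apply, smul_eq_mul]
  ring

lemma lap_comp_of_analyticAt {a : ℂ → ℂ} {H : ℂ → ℝ} {w : ℂ} (ha : AnalyticAt ℂ a w)
    (hH : ContDiffAt ℝ 2 H (a w)) :
    lap (fun z => H (a z)) w = ‖deriv a w‖ ^ 2 * lap H (a w) := by
  have hHD : DifferentiableAt ℝ (fderiv ℝ H) (a w) :=
    (hH.fderiv_right (m := 1) le_rfl).differentiableAt one_ne_zero
  have hfirst (v : ℂ) : (fun z => fderiv ℝ (fun z => H (a z)) z v) =ᶠ[𝓝 w]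
      fun z => fderiv ℝ H (a z) (deriv a z * v) := by
    filter_upwards [ha.eventually_analyticAt,
      ha.continuousAt.eventually (hH.eventually (by simp))] with z haz hHz
    rw [fderiv_fun_comp z (hHz.differentiableAt two_ne_zero)
        (haz.differentiableAt.restrictScalars ℝ),
      ContinuousLinearMap.comp_apply, haz.differentiableAt.real_fderiv_apply]
  have hsecond (v : ℂ) : fderiv ℝ (fun z => fderiv ℝ H (a z) (deriv a z * v)) w v =
      fderiv ℝ (fderiv ℝ H) (a w) (deriv a w * v) (deriv a w * v) +
        fderiv ℝ H (a w) (deriv (deriv a) w * v * v) := by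
    have hD : HasFDerivAt (fun z => fderiv ℝ H (a z) (deriv a z * v)) _ w :=
      (hHD.hasFDerivAt.comp w (ha.differentiableAt.restrictScalars ℝ).hasFDerivAt).clm_apply
        ((ha.deriv.differentiableAt.restrictScalars ℝ).hasFDerivAt.mul_const' v)
    rw [hD.fderiv]
    simp only [Function.comp_apply, op_smul_eq_smul, add_apply, ContinuousLinearMap.comp_apply,
      smul_apply, smul_eq_mul, ContinuousLinearMap.flip_apply, add_comm, add_left_inj,
      ha.differentiableAt.real_fderiv_apply, ha.deriv.differentiableAt.real_fderiv_apply]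
    ring_nf
  -- the `a''` terms cancel since `(a'' I) I = -a''`
  rw [lap, (hfirst 1).fderiv_eq, (hfirst I).fderiv_eq, hsecond, hsecond, lap_eq_fderiv_fderiv hHD,
    ← ContinuousLinearMap.diag_add_diag_mul_I]
  simp only [mul_one, mul_assoc, I_mul_I, mul_neg_one, map_neg]
  ring

lemma lap_comp_norm_sq {φ d : ℝ → ℝ} {d' : ℝ} {ζ : ℂ}
    (hφ : ∀ᶠ t in 𝓝 (‖ζ‖ ^ 2), HasDerivAt φ (d t) t) (hd : HasDerivAt d d' (‖ζ‖ ^ 2)) :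
    lap (fun z => φ (‖z‖ ^ 2)) ζ = 4 * (‖ζ‖ ^ 2 * d' + d (‖ζ‖ ^ 2)) := by
  have hN (z : ℂ) : HasFDerivAt (fun z : ℂ => ‖z‖ ^ 2) (2 • innerSL ℝ z) z :=
    (hasStrictFDerivAt_norm_sq z).hasFDerivAt
  have hfirst (v : ℂ) : (fun z => fderiv ℝ (fun z => φ (‖z‖ ^ 2)) z v) =ᶠ[𝓝 ζ]
      fun z => d (‖z‖ ^ 2) * (2 * ⟪v, z⟫) := by
    filter_upwards [(by fun_prop : Continuous fun z : ℂ => ‖z‖ ^ 2).continuousAt.eventually hφ]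
      with z hz
    have hφz : HasFDerivAt (fun z => φ (‖z‖ ^ 2)) _ z := hz.comp_hasFDerivAt z (hN z)
    rw [hφz.fderiv]
    simp only [smul_apply, innerSL_apply_apply, smul_eq_mul, nsmul_eq_mul, real_inner_comm]
    push_cast
    ring
  have hsecond (v : ℂ) : HasFDerivAt (fun z => d (‖z‖ ^ 2) * (2 * ⟪v, z⟫)) _ ζ :=
    (hd.comp_hasFDerivAt ζ (hN ζ)).mul (((innerSL ℝ v).hasFDerivAt).const_mul 2)
  rw [lap, (hfirst 1).fderiv_eq, (hfirst I).fderiv_eq, (hsecond 1).fderiv, (hsecond I).fderiv]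
  simp only [Complex.sq_norm, normSq_apply, Function.comp_apply, Complex.inner, map_one, mul_one,
    add_apply, smul_apply, coe_innerSL_apply, inner_self_eq_norm_sq_to_K, norm_one,
    one_pow, smul_eq_mul, one_mul, conj_re, nsmul_eq_mul, Nat.cast_ofNat,
    conj_I, mul_neg, neg_re, mul_re, I_re, mul_zero, I_im, zero_sub, neg_neg, norm_I, zero_mul,
    conj_im, sub_neg_eq_add, zero_add]
  ring

lemma lap_comp_norm_sq_comp {a : ℂ → ℂ} {φ d : ℝ → ℝ} {d' : ℝ} {w : ℂ}
    (ha : AnalyticAt ℂ a w) (hφ₂ : ContDiffAt ℝ 2 φ (‖a w‖ ^ 2))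
    (hφ : ∀ᶠ t in 𝓝 (‖a w‖ ^ 2), HasDerivAt φ (d t) t) (hd : HasDerivAt d d' (‖a w‖ ^ 2)) :
    lap (fun z => φ (‖a z‖ ^ 2)) w =
      ‖deriv a w‖ ^ 2 * (4 * (‖a w‖ ^ 2 * d' + d (‖a w‖ ^ 2))) := by
  have hH : ContDiffAt ℝ 2 (fun ζ : ℂ => φ (‖ζ‖ ^ 2)) (a w) :=
    hφ₂.comp (a w) (contDiff_norm_sq ℝ).contDiffAt
  rw [lap_comp_of_analyticAt ha hH, lap_comp_norm_sq hφ hd]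

lemma lap_log_norm_comp_eq_zero {μ : ℂ → ℂ} {w : ℂ} (hμ : AnalyticAt ℂ μ w) (hμ₀ : μ w ≠ 0) :
    lap (fun z => Real.log ‖μ z‖) w = 0 := by
  have hM : ‖μ w‖ ^ 2 ≠ 0 := by positivity
  have hlog : (fun z => Real.log ‖μ z‖) = fun z => Real.log (‖μ z‖ ^ 2) / 2 := by
    funext z
    rw [Real.log_pow]
    push_cast
    ring
  rw [hlog, lap_comp_norm_sq_comp (d := fun t => t⁻¹ / 2) (d' := -((‖μ w‖ ^ 2) ^ 2)⁻¹ / 2) hμ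
    ((Real.contDiffAt_log.2 hM).div_const 2)
    ((eventually_ne_nhds hM).mono fun t ht => (Real.hasDerivAt_log ht).div_const 2)
    ((hasDerivAt_inv hM).div_const 2)]
  field_simp
  ring

lemma lap_log_quadratic_norm_sq_comp {a : ℂ → ℂ} {w : ℂ} (c : ℝ) (ha : AnalyticAt ℂ a w)
    (hq : 0 < 1 - 2 * ‖a w‖ ^ 2 * c + (‖a w‖ ^ 2) ^ 2) :
    lap (fun z => Real.log (1 - 2 * ‖a z‖ ^ 2 * c + (‖a z‖ ^ 2) ^ 2) / 2) w =
      4 * ‖deriv a w‖ ^ 2 * (2 * ‖a w‖ ^ 2 - (1 + (‖a w‖ ^ 2) ^ 2) * c) /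
        (1 - 2 * ‖a w‖ ^ 2 * c + (‖a w‖ ^ 2) ^ 2) ^ 2 := by
  set q : ℝ → ℝ := fun t => 1 - 2 * t * c + t ^ 2 with hq_def
  have hq' (t : ℝ) : HasDerivAt q (2 * (t - c)) t :=
    ((((hasDerivAt_id t).const_mul 2).mul_const c).const_sub 1).add ((hasDerivAt_id t).pow 2)
      |>.congr_deriv (by simp only [mul_one, Nat.cast_ofNat, id_eq]; ring)
  have hq_smooth : ContDiff ℝ 2 q := by
    rw [hq_def]
    fun_prop
  rw [lap_comp_norm_sq_comp (φ := fun t => Real.log (q t) / 2) (d := fun t => (t - c) / q t)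
    (d' := (q (‖a w‖ ^ 2) - (‖a w‖ ^ 2 - c) * (2 * (‖a w‖ ^ 2 - c))) / q (‖a w‖ ^ 2) ^ 2)
    ha ?_ ?_ ?_]
  · simp only [q] at hq ⊢
    field_simp
    ring
  · exact (hq_smooth.contDiffAt.log hq.ne').div_const 2
  · filter_upwards [(by fun_prop : Continuous q).continuousAt.eventually
      (eventually_gt_nhds hq)] with s hs
    exact ((hq' s).log hs.ne').div_const 2 |>.congr_deriv (by field_simp)
  · exact ((hasDerivAt_id _).sub_const c).div (hq' _) hq.ne' |>.congr_deriv (by simp)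

lemma one_sub_two_mul_sq_mul_add_sq_sq_pos {x c : ℝ} (hx : 0 ≤ x) (hx₁ : x ≠ 1)
    (hc : c ≤ 1) :
    0 < 1 - 2 * x ^ 2 * c + (x ^ 2) ^ 2 := by
  have hx₂ : x ^ 2 ≠ 1 := by rwa [Ne, pow_eq_one_iff_of_nonneg hx two_ne_zero]
  have : 0 < (1 - x ^ 2) ^ 2 := by positivity [sub_ne_zero.2 hx₂.symm]
  nlinarith [sq_nonneg x]

lemma Real.log_sqrt_four_mul_sq_mul {m q : ℝ} (hm : m ≠ 0) (hq : 0 < q) :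
    Real.log √(4 * m ^ 2 * q) = Real.log 2 + (Real.log m + Real.log q / 2) := by
  rw [Real.log_sqrt (by positivity), Real.log_mul (by positivity) hq.ne',
    Real.log_mul (by norm_num) (by positivity), Real.log_pow, show (4 : ℝ) = 2 ^ 2 by norm_num,
    Real.log_pow]
  push_cast
  ring

theorem stmt_10 (U : Set ℂ) (hU : IsOpen U) (a μ : ℂ → ℂ)
    (ha : ∀ w ∈ U, DifferentiableAt ℂ a w) (hμ : ∀ w ∈ U, DifferentiableAt ℂ μ w)
    (hμ0 : ∀ w ∈ U, μ w ≠ 0) (ha1 : ∀ w ∈ U, ‖a w‖ ≠ 1)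
    (θ : ℝ) (lam : ℂ → ℝ)
    (hlam : ∀ w, lam w = Real.sqrt (4 * ‖μ w‖ ^ 2 *
      (1 - 2 * ‖a w‖ ^ 2 * Real.cos θ + ‖a w‖ ^ 4))) :
    ∀ w ∈ U,
      -(1 / (lam w) ^ 2) * lap (fun z => Real.log (lam z)) w =
        ‖deriv a w‖ ^ 2 *
          ((1 + ‖a w‖ ^ 4) * Real.cos θ - 2 * ‖a w‖ ^ 2) /
          (‖μ w‖ ^ 2 *
            (1 - 2 * ‖a w‖ ^ 2 * Real.cos θ + ‖a w‖ ^ 4) ^ 3) := by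
  intro w hw
  simp only [show ∀ z, ‖a z‖ ^ 4 = (‖a z‖ ^ 2) ^ 2 from fun z => by ring] at hlam ⊢
  have ha_an : AnalyticAt ℂ a w :=
    DifferentiableOn.analyticAt (fun z hz => (ha z hz).differentiableWithinAt) (hU.mem_nhds hw)
  have hμ_an : AnalyticAt ℂ μ w :=
    DifferentiableOn.analyticAt (fun z hz => (hμ z hz).differentiableWithinAt) (hU.mem_nhds hw)
  have hq (z : ℂ) (hz : z ∈ U) : 0 < 1 - 2 * ‖a z‖ ^ 2 * Real.cos θ + (‖a z‖ ^ 2) ^ 2 :=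
    one_sub_two_mul_sq_mul_add_sq_sq_pos (norm_nonneg _) (ha1 z hz) (Real.cos_le_one θ)
  have hμ_norm (z : ℂ) (hz : z ∈ U) : ‖μ z‖ ≠ 0 := norm_ne_zero_iff.2 (hμ0 z hz)
  have hsplit : (fun z => Real.log (lam z)) =ᶠ[𝓝 w] fun z => Real.log 2 +
      (Real.log ‖μ z‖ + Real.log (1 - 2 * ‖a z‖ ^ 2 * Real.cos θ + (‖a z‖ ^ 2) ^ 2) / 2) := by
    filter_upwards [hU.mem_nhds hw] with z hz
    rw [hlam, Real.log_sqrt_four_mul_sq_mul (hμ_norm z hz) (hq z hz)]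
  have hμ_smooth : ContDiffAt ℝ 2 (fun z => Real.log ‖μ z‖) w :=
    ((hμ_an.contDiffAt.restrict_scalars ℝ).norm ℝ (hμ0 w hw)).log (hμ_norm w hw)
  have ha_smooth : ContDiffAt ℝ 2
      (fun z => Real.log (1 - 2 * ‖a z‖ ^ 2 * Real.cos θ + (‖a z‖ ^ 2) ^ 2) / 2) w := by
    have := (ha_an.contDiffAt.restrict_scalars ℝ).norm_sq ℝ (n := 2)
    fun_prop (disch := exact (hq w hw).ne')
  rw [lap_congr hsplit, lap_const_add, lap_add hμ_smooth ha_smooth,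
    lap_log_norm_comp_eq_zero hμ_an (hμ0 w hw), lap_log_quadratic_norm_sq_comp _ ha_an (hq w hw),
    hlam, Real.sq_sqrt (mul_pos (by positivity [hμ_norm w hw]) (hq w hw)).le]
  have hqw := (hq w hw).ne'
  have hμw := hμ_norm w hw
  generalize ‖a w‖ ^ 2 = t at hqw ⊢
  field_simp
  ring
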